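/- arXiv:2603.02770 — 5 statements merged into one kernel-verified Lean document; each statement's English description precedes it below -/
import Mathlib

section
/- Let A be a semipositive n×m real matrix with rank(A) < m. Then there exists a column index r such that the n×(m−1) matrix obtained from A by deleting column r is again semipositive. -/
def Matrix.IsSemipositive {n m : ℕ} (A : Matrix (Fin n) (Fin m) ℝ) : Prop :=
  ∃ v : Fin m → ℝ, (∀ j, 0 < v j) ∧ ∀ i, 0 < A.mulVec v i

/-!
Since `rank A < m + 1`, the kernel of `A` contains a vector `w` with a positive entry. Sliding a
positive `v` with `A v > 0` along `-w` until its first coordinate `r` vanishes gives `u ≥ 0` with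
`u r = 0` and `A u = A v > 0`. Dropping coordinate `r` of `u` shows that the submatrix without
column `r` maps a nonnegative vector to a positive one, and adding a small positive multiple of
the all-ones vector makes that vector positive, since `{x | A x > 0}` is open.
-/

open Filter Topology

namespace Matrix

theorem exists_mulVec_eq_zero_of_rank_lt {m n : Type*} [Fintype n] {K : Type*} [Field K]
    (A : Matrix m n K) (hA : A.rank < Fintype.card n) : ∃ w ≠ 0, A *ᵥ w = 0 := by
  by_contra! h
  have hinj : Function.Injective A.mulVecLin :=
    LinearMap.ker_eq_bot.mp <| ker_mulVecLin_eq_bot_iff.mpr fun w hw =>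
      by_contra fun hw' => h w hw' hw
  have : A.rank = Fintype.card n := by
    rw [rank, LinearMap.finrank_range_of_inj hinj, Module.finrank_fintype_fun_eq_card]
  omega

theorem exists_mulVec_eq_zero_pos_of_rank_lt {m n : Type*} [Fintype n] (A : Matrix m n ℝ)
    (hA : A.rank < Fintype.card n) : ∃ w, A *ᵥ w = 0 ∧ ∃ j, 0 < w j := by
  obtain ⟨w, hw0, hAw⟩ := A.exists_mulVec_eq_zero_of_rank_lt hA
  obtain ⟨j, hj⟩ := Function.ne_iff.mp hw0
  rcases hj.lt_or_gt with hneg | hpos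
  · exact ⟨-w, by rw [mulVec_neg, hAw, neg_zero], j, neg_pos.mpr hneg⟩
  · exact ⟨w, hAw, j, hpos⟩

end Matrix

theorem exists_sub_smul_nonneg_and_eq_zero {ι : Type*} [Fintype ι] {v w : ι → ℝ}
    (hv : 0 ≤ v) (hw : ∃ j, 0 < w j) : ∃ (t : ℝ) (r : ι), 0 ≤ v - t • w ∧ (v - t • w) r = 0 := by
  classical
  obtain ⟨r, hr, hmin⟩ := Finset.exists_min_image {j | 0 < w j} (fun j => v j / w j)
    (by obtain ⟨j, hj⟩ := hw; exact ⟨j, by simpa using hj⟩)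
  simp only [Finset.mem_filter, Finset.mem_univ, true_and] at hr hmin
  refine ⟨v r / w r, r, fun j => ?_, by simp [div_mul_cancel₀ _ hr.ne']⟩
  simp only [Pi.zero_apply, Pi.sub_apply, Pi.smul_apply, smul_eq_mul, sub_nonneg]
  rcases le_or_gt (w j) 0 with hj | hj
  · exact (mul_nonpos_of_nonneg_of_nonpos (div_nonneg (hv r) hr.le) hj).trans (hv j)
  · exact (le_div_iff₀ hj).mp (hmin j hj)

namespace Matrix

variable {n m : ℕ}

theorem IsSemipositive.of_nonneg (A : Matrix (Fin n) (Fin m) ℝ) {u : Fin m → ℝ} (hu : 0 ≤ u)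
    (hAu : ∀ i, 0 < (A *ᵥ u) i) : A.IsSemipositive := by
  have hcont : Continuous fun ε : ℝ => A *ᵥ (u + ε • 1) := by fun_prop
  have hnear : ∀ᶠ ε in 𝓝 (0 : ℝ), ∀ i, 0 < (A *ᵥ (u + ε • 1)) i :=
    eventually_all.mpr fun i => continuousAt_const.eventually_lt
      ((continuous_apply i).comp hcont).continuousAt (by simpa using hAu i)
  obtain ⟨ε, hε, hεpos⟩ :=
    ((hnear.filter_mono nhdsWithin_le_nhds).and (self_mem_nhdsWithin (s := Set.Ioi 0))).exists
  exact ⟨u + ε • 1, fun j => by simpa using add_pos_of_nonneg_of_pos (hu j) hεpos, hε⟩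

theorem submatrix_succAbove_mulVec_of_eq_zero {R : Type*} [NonUnitalNonAssocSemiring R]
    (A : Matrix (Fin n) (Fin (m + 1)) R) {u : Fin (m + 1) → R} {r : Fin (m + 1)} (hu : u r = 0) :
    A.submatrix id r.succAbove *ᵥ (u ∘ r.succAbove) = A *ᵥ u := by
  ext i
  simp [mulVec, dotProduct, Fin.sum_univ_succAbove _ r, hu]

end Matrix

/-- If a semipositive matrix has rank smaller than its number of columns, then some column
can be deleted preserving semipositivity. -/
theorem semipositive_delete_column {n m : ℕ} (A : Matrix (Fin n) (Fin (m + 1)) ℝ)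
    (hS : A.IsSemipositive) (hr : A.rank < m + 1) :
    ∃ r : Fin (m + 1), (A.submatrix id r.succAbove).IsSemipositive := by
  obtain ⟨v, hv, hAv⟩ := hS
  obtain ⟨w, hAw, hw⟩ := A.exists_mulVec_eq_zero_pos_of_rank_lt (by simpa using hr)
  obtain ⟨t, r, hu, hur⟩ := exists_sub_smul_nonneg_and_eq_zero (fun j => (hv j).le) hw
  refine ⟨r, .of_nonneg _ (u := (v - t • w) ∘ r.succAbove) (fun j => hu _) fun i => ?_⟩
  rw [Matrix.submatrix_succAbove_mulVec_of_eq_zero A hur, Matrix.mulVec_sub, Matrix.mulVec_smul,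
    hAw, smul_zero, sub_zero]
  exact hAv i
end

section
/- Let A be an n×n real matrix written in block form A = [[S, N],[X, Y]] where S is a k×k block (k < n) and every entry of the upper-right block N is nonpositive. If A is semipositive, then S is semipositive. -/
/-- If `A = [[S, 0],[X, Y]]` is semipositive (with entrywise nonpositive upper-right block), then the top-left
principal block `S` is semipositive. -/
theorem block_nonpositive_semipositive {n k : ℕ} (hk : k < n)
    (A : Matrix (Fin n) (Fin n) ℝ)
    (hblock : ∀ i j : Fin n, (i : ℕ) < k → k ≤ (j : ℕ) → A i j ≤ 0)
    (hS : A.IsSemipositive) :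
    (A.submatrix (Fin.castLE hk.le) (Fin.castLE hk.le) : Matrix (Fin k) (Fin k) ℝ).IsSemipositive := by
  obtain ⟨v, hv, hAv⟩ := hS
  refine ⟨fun j => v (Fin.castLE hk.le j), fun j => hv _, fun i => ?_⟩
  set ci := Fin.castLE hk.le i with hci
  set g : ℕ → ℝ := fun j => if h : j < n then A ci ⟨j, h⟩ * v ⟨j, h⟩ else 0 with hg
  have key : A.mulVec v ci ≤
      (A.submatrix (Fin.castLE hk.le) (Fin.castLE hk.le)).mulVec
        (fun j => v (Fin.castLE hk.le j)) i := by
    simp only [Matrix.mulVec, dotProduct, Matrix.submatrix_apply]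
    have h1 : ∑ j : Fin n, A ci j * v j = ∑ j ∈ Finset.range n, g j := by
      rw [← Fin.sum_univ_eq_sum_range]
      exact Finset.sum_congr rfl fun j _ => by simp [hg, j.isLt]
    have h2 : ∑ j : Fin k, A ci (Fin.castLE hk.le j) * v (Fin.castLE hk.le j)
        = ∑ j ∈ Finset.range k, g j := by
      rw [← Fin.sum_univ_eq_sum_range]
      refine Finset.sum_congr rfl fun j _ => ?_
      have hj : (j : ℕ) < n := lt_of_lt_of_le j.isLt hk.le
      simp only [hg, dif_pos hj]
      rfl
    rw [h1, h2, Finset.range_eq_Ico,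
      ← Finset.sum_Ico_consecutive g (Nat.zero_le k) hk.le, ← Finset.range_eq_Ico]
    have h3 : ∑ j ∈ Finset.Ico k n, g j ≤ 0 := by
      refine Finset.sum_nonpos fun j hj => ?_
      obtain ⟨hj1, hj2⟩ := Finset.mem_Ico.mp hj
      simp only [hg, dif_pos hj2]
      exact mul_nonpos_of_nonpos_of_nonneg
        (hblock ci ⟨j, hj2⟩ i.isLt hj1) (hv ⟨j, hj2⟩).le
    linarith
  exact lt_of_lt_of_le (hAv _) key
end

section
/- Let G be a finite directed bipartite graph with parts X and R in which every vertex of X has out-degree exactly 1 and every vertex of R has in-degree exactly 1. If G is strongly connected, then G has no cut vertex, i.e., its underlying undirected graph is 2-connected (so G is a strong block). -/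
/-!
Removing a vertex `w` cannot disconnect the digraph if `w` has at most one out-neighbour `h`:
every other vertex `u` is reached from `w` by a directed path, and the part of it after its
last visit to `w` starts at `h` and avoids `w`, so all vertices other than `w` hang off `h`.
Dually if `w` has at most one in-neighbour. In the bipartite digraph every vertex of `X` has
exactly one out-neighbour and every vertex of `R` exactly one in-neighbour.
-/

open Relation

namespace Relation

variable {α : Type*}

def Avoiding (r : α → α → Prop) (w a b : α) : Prop := r a b ∧ a ≠ w ∧ b ≠ w

variable {r : α → α → Prop} {w h u v : α}

theorem reflTransGen_avoiding_of_forall_succ_eq (hw : ∀ c, r w c → c = h)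
    (hwu : ReflTransGen r w u) (hu : u ≠ w) : ReflTransGen (Avoiding r w) h u := by
  induction hwu with
  | refl => exact absurd rfl hu
  | @tail b c _ hbc ih =>
    by_cases hb : b = w
    · subst hb
      rw [hw c hbc]
    · exact ih hb |>.tail ⟨hbc, hb, hu⟩

theorem reflTransGen_avoiding_of_forall_pred_eq (hw : ∀ a, r a w → a = h)
    (huw : ReflTransGen r u w) (hu : u ≠ w) : ReflTransGen (Avoiding r w) u h := by
  have := reflTransGen_avoiding_of_forall_succ_eq (r := Function.swap r) hw
    (reflTransGen_swap.2 huw) hu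
  exact reflTransGen_swap.1 <|
    ReflTransGen.mono (fun a b ⟨hab, ha, hb⟩ => ⟨hab, hb, ha⟩) _ _ this

theorem reflTransGen_avoiding_symm_of_subsingleton_succ_or_pred
    (hconn : ∀ u v, ReflTransGen r u v)
    (hw : (∃ h, ∀ c, r w c → c = h) ∨ (∃ h, ∀ a, r a w → a = h))
    (hu : u ≠ w) (hv : v ≠ w) : ReflTransGen (Avoiding (fun a b => r a b ∨ r b a) w) u v := by
  set S := Avoiding (fun a b => r a b ∨ r b a) w
  have hsymm : ∀ {a b}, ReflTransGen S a b → ReflTransGen S b a := fun hab =>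
    reflTransGen_swap.1 <|
      ReflTransGen.mono (fun a b ⟨hab, ha, hb⟩ => ⟨hab.symm, hb, ha⟩) _ _ hab
  have hle : Avoiding r w ≤ S := fun a b ⟨hab, ha, hb⟩ => ⟨.inl hab, ha, hb⟩
  suffices ∃ hub, ∀ u, u ≠ w → ReflTransGen S u hub by
    obtain ⟨hub, hhub⟩ := this
    exact (hhub u hu).trans (hsymm (hhub v hv))
  rcases hw with ⟨h, hsucc⟩ | ⟨h, hpred⟩
  · exact ⟨h, fun u hu => hsymm <| ReflTransGen.mono hle _ _
      (reflTransGen_avoiding_of_forall_succ_eq hsucc (hconn w u) hu)⟩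
  · exact ⟨h, fun u hu => ReflTransGen.mono hle _ _
      (reflTransGen_avoiding_of_forall_pred_eq hpred (hconn u w) hu)⟩

end Relation

theorem bipartite_subsingleton_succ_or_pred {X R : Type*} {E1 : X → R → Prop}
    {E2 : R → X → Prop} {step : X ⊕ R → X ⊕ R → Prop}
    (hstep : ∀ u v, step u v ↔
      (∃ x r, u = Sum.inl x ∧ v = Sum.inr r ∧ E1 x r) ∨
      (∃ r x, u = Sum.inr r ∧ v = Sum.inl x ∧ E2 r x))
    (hout : ∀ x : X, ∃! r : R, E1 x r) (hin : ∀ r : R, ∃! x : X, E1 x r) (w : X ⊕ R) :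
    (∃ h, ∀ c, step w c → c = h) ∨ (∃ h, ∀ a, step a w → a = h) := by
  rcases w with x | r
  · obtain ⟨r, -, hr⟩ := hout x
    refine .inl ⟨.inr r, fun c hc => ?_⟩
    rcases (hstep _ _).1 hc with ⟨x', r', hx', rfl, hE⟩ | ⟨_, _, hx', -⟩
    · cases hx'
      rw [hr r' hE]
    · cases hx'
  · obtain ⟨x, -, hx⟩ := hin r
    refine .inr ⟨.inl x, fun a ha => ?_⟩
    rcases (hstep _ _).1 ha with ⟨x', r', rfl, hr', hE⟩ | ⟨_, _, -, hr', -⟩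
    · cases hr'
      rw [hx x' hE]
    · cases hr'

theorem strong_block_of_degree_conditions_general {X R : Type*}
    (E1 : X → R → Prop) (E2 : R → X → Prop)
    -- the step relation of the bipartite digraph on `X ⊕ R`
    (step : X ⊕ R → X ⊕ R → Prop)
    (hstep : ∀ u v, step u v ↔
      (∃ x r, u = Sum.inl x ∧ v = Sum.inr r ∧ E1 x r) ∨
      (∃ r x, u = Sum.inr r ∧ v = Sum.inl x ∧ E2 r x))
    (hout : ∀ x : X, ∃! r : R, E1 x r)
    (hin : ∀ r : R, ∃! x : X, E1 x r)
    (hconn : ∀ u v : X ⊕ R, Relation.ReflTransGen step u v) :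
    ∀ w u v : X ⊕ R, u ≠ w → v ≠ w →
      Relation.ReflTransGen (fun a b => (step a b ∨ step b a) ∧ a ≠ w ∧ b ≠ w) u v :=
  fun w _ _ hu hv => reflTransGen_avoiding_symm_of_subsingleton_succ_or_pred hconn
    (bipartite_subsingleton_succ_or_pred hstep hout hin w) hu hv

/-- In a finite directed bipartite graph with parts `X` and `R`, where every `X`-vertex has
out-degree exactly one and every `R`-vertex has in-degree exactly one, strong connectivity
implies that there is no cut vertex: removing any single vertex leaves the underlying
undirected graph connected. -/
theorem strong_block_of_degree_conditions {X R : Type*} [Fintype X] [Fintype R]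
    (E1 : X → R → Prop) (E2 : R → X → Prop)
    -- the step relation of the bipartite digraph on `X ⊕ R`
    (step : X ⊕ R → X ⊕ R → Prop)
    (hstep : ∀ u v, step u v ↔
      (∃ x r, u = Sum.inl x ∧ v = Sum.inr r ∧ E1 x r) ∨
      (∃ r x, u = Sum.inr r ∧ v = Sum.inl x ∧ E2 r x))
    (hout : ∀ x : X, ∃! r : R, E1 x r)
    (hin : ∀ r : R, ∃! x : X, E1 x r)
    (hconn : ∀ u v : X ⊕ R, Relation.ReflTransGen step u v) :
    ∀ w u v : X ⊕ R, u ≠ w → v ≠ w →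
      Relation.ReflTransGen (fun a b => (step a b ∨ step b a) ∧ a ≠ w ∧ b ≠ w) u v :=
  strong_block_of_degree_conditions_general E1 E2 step hstep hout hin hconn
end

section
/- Let A be an n×n matrix with A_{ii} = −1 for all i and off-diagonal entries in {0,1}, and suppose the contributing permutation cycles of A are exactly N ≥ 2 cycles that are pairwise vertex-disjoint (no two share an index). Then det A = 0. -/
def IsContributingCycle {n : ℕ} (A : Matrix (Fin n) (Fin n) ℝ) (χ : Equiv.Perm (Fin n)) :
    Prop :=
  χ.IsCycle ∧ ∀ j ∈ χ.support, A j (χ j) ≠ 0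

/-- If `A` has diagonal `-1`, off-diagonal entries in `{0,1}`, and its contributing cycles
are exactly `N ≥ 2` pairwise vertex-disjoint cycles, then `det A = 0`. -/
theorem det_of_disjoint_contributing_cycles {n N : ℕ} (hN : 2 ≤ N)
    (A : Matrix (Fin n) (Fin n) ℝ)
    (hdiag : ∀ i, A i i = -1)
    (hoff : ∀ i j, i ≠ j → A i j = 0 ∨ A i j = 1)
    (𝒞 : Finset (Equiv.Perm (Fin n))) (hcard : 𝒞.card = N)
    (hmem : ∀ χ ∈ 𝒞, IsContributingCycle A χ)
    (hall : ∀ χ : Equiv.Perm (Fin n), IsContributingCycle A χ → χ ∈ 𝒞)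
    (hdisj : ∀ χ₁ ∈ 𝒞, ∀ χ₂ ∈ 𝒞, χ₁ ≠ χ₂ → Disjoint χ₁.support χ₂.support) :
    A.det = 0 := by
  classical
  -- pairwise disjointness / commutativity for subsets of 𝒞
  have hpdisj : ∀ S : Finset (Equiv.Perm (Fin n)), S ⊆ 𝒞 →
      (S : Set (Equiv.Perm (Fin n))).Pairwise fun a b => Equiv.Perm.Disjoint a b := by
    intro S hS a ha b hb hab
    exact Equiv.Perm.disjoint_iff_disjoint_support.mpr
      (hdisj a (hS (Finset.mem_coe.mp ha)) b (hS (Finset.mem_coe.mp hb)) hab)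
  have hpcomm : ∀ S : Finset (Equiv.Perm (Fin n)), S ⊆ 𝒞 →
      (S : Set (Equiv.Perm (Fin n))).Pairwise fun a b => Commute (id a) (id b) := by
    intro S hS a ha b hb hab
    exact (hpdisj S hS ha hb hab).commute
  -- the product map
  set f : Finset (Equiv.Perm (Fin n)) → Equiv.Perm (Fin n) := fun S =>
    if h : (S : Set (Equiv.Perm (Fin n))).Pairwise fun a b => Commute (id a) (id b)
    then S.noncommProd id h else 1 with hf
  have hfS : ∀ S, S ⊆ 𝒞 → ∀ (h : (S : Set (Equiv.Perm (Fin n))).Pairwise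
      fun a b => Commute (id a) (id b)), f S = S.noncommProd id h := by
    intro S hS h
    simp only [hf, dif_pos (hpcomm S hS)]
  -- cycle factors of f S
  have hcf : ∀ S, S ⊆ 𝒞 → (f S).cycleFactorsFinset = S := by
    intro S hS
    rw [Equiv.Perm.cycleFactorsFinset_eq_finset]
    refine ⟨fun χ hχ => (hmem χ (hS hχ)).1, hpdisj S hS, ?_⟩
    exact (hfS S hS _).symm
  -- f is a left inverse of cycleFactorsFinset
  have hinv : ∀ σ : Equiv.Perm (Fin n), σ.cycleFactorsFinset ⊆ 𝒞 →
      f σ.cycleFactorsFinset = σ := by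
    intro σ h
    rw [hfS _ h (Equiv.Perm.cycleFactorsFinset_mem_commute σ)]
    exact Equiv.Perm.cycleFactorsFinset_noncommProd σ _
  -- determinant via transpose (entries A i (σ i))
  have hdet : A.det = ∑ σ : Equiv.Perm (Fin n),
      ((Equiv.Perm.sign σ : ℤ) : ℝ) * ∏ i, A i (σ i) := by
    rw [← Matrix.det_transpose, Matrix.det_apply']
    exact Finset.sum_congr rfl fun σ _ => by simp only [Matrix.transpose_apply]
  rw [hdet]
  -- terms vanish outside contributing permutations
  have hzero : ∀ σ ∈ (Finset.univ : Finset (Equiv.Perm (Fin n))),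
      ((Equiv.Perm.sign σ : ℤ) : ℝ) * ∏ i, A i (σ i) ≠ 0 →
      σ.cycleFactorsFinset ⊆ 𝒞 := by
    intro σ _ hT
    by_contra hsub
    obtain ⟨χ, hχ, hχC⟩ := Finset.not_subset.mp hsub
    have hχ' := Equiv.Perm.mem_cycleFactorsFinset_iff.mp hχ
    have hnc : ¬ IsContributingCycle A χ := fun h => hχC (hall χ h)
    rw [IsContributingCycle, not_and] at hnc
    push_neg at hnc
    obtain ⟨j, hj, hj0⟩ := hnc hχ'.1
    have : A j (σ j) = 0 := by rw [← hχ'.2 j hj]; exact hj0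
    exact hT (by rw [Finset.prod_eq_zero (Finset.mem_univ j) this, mul_zero])
  rw [← Finset.sum_filter_of_ne hzero]
  -- evaluate the term of f S for S ⊆ 𝒞
  have heval : ∀ S ∈ 𝒞.powerset,
      ((-1 : ℝ)) ^ (n + S.card) =
      ((Equiv.Perm.sign (f S) : ℤ) : ℝ) * ∏ i, A i (f S i) := by
    intro S hSp
    have hS : S ⊆ 𝒞 := Finset.mem_powerset.mp hSp
    have hcomm := hpcomm S hS
    have hd := hpdisj S hS
    -- support of f S
    have hsupp : (f S).support = S.biUnion Equiv.Perm.support := by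
      rw [hfS S hS hcomm]
      exact Equiv.Perm.support_noncommProd hd
    have hcards : (f S).support.card = ∑ χ ∈ S, χ.support.card := by
      rw [hsupp]
      exact Finset.card_biUnion fun a ha b hb hab => hdisj a (hS ha) b (hS hb) hab
    have hle : (f S).support.card ≤ n := by
      simpa using Finset.card_le_univ (f S).support
    -- sign of f S
    have hsign : Equiv.Perm.sign (f S) = ∏ χ ∈ S, Equiv.Perm.sign χ := by
      rw [hfS S hS hcomm, Finset.map_noncommProd S id hcomm Equiv.Perm.sign,
        Finset.noncommProd_eq_prod]
      rfl
    have hsignval : ((Equiv.Perm.sign (f S) : ℤ) : ℝ)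
        = (-1 : ℝ) ^ ((∑ χ ∈ S, χ.support.card) + S.card) := by
      rw [hsign]
      push_cast
      have : ∀ χ ∈ S, ((Equiv.Perm.sign χ : ℤ) : ℝ) = (-1 : ℝ) ^ (χ.support.card + 1) := by
        intro χ hχ
        rw [(hmem χ (hS hχ)).1.sign]
        push_cast
        ring
      rw [Finset.prod_congr rfl this, Finset.prod_pow_eq_pow_sum,
        Finset.sum_add_distrib, Finset.sum_const, smul_eq_mul, mul_one]
    -- the entry product
    have hprod : (∏ i, A i (f S i)) = (-1 : ℝ) ^ (n - (f S).support.card) := by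
      rw [← Finset.prod_mul_prod_compl (f S).support (fun i => A i (f S i))]
      have h1 : (∏ i ∈ (f S).support, A i (f S i)) = 1 := by
        refine Finset.prod_eq_one fun i hi => ?_
        rw [hsupp] at hi
        obtain ⟨χ, hχS, hiχ⟩ := Finset.mem_biUnion.mp hi
        have hagree : χ i = f S i := by
          have hχf : χ ∈ (f S).cycleFactorsFinset := by rw [hcf S hS]; exact hχS
          exact (Equiv.Perm.mem_cycleFactorsFinset_iff.mp hχf).2 i hiχ
        have hne : i ≠ χ i := (Equiv.Perm.mem_support.mp hiχ).symm
        have hnz : A i (χ i) ≠ 0 := (hmem χ (hS hχS)).2 i hiχ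
        rcases hoff i (χ i) hne with h | h
        · exact absurd h hnz
        · rw [← hagree, h]
      have h2 : (∏ i ∈ ((f S).support)ᶜ, A i (f S i))
          = (-1 : ℝ) ^ (n - (f S).support.card) := by
        have : ∀ i ∈ ((f S).support)ᶜ, A i (f S i) = -1 := by
          intro i hi
          rw [Equiv.Perm.notMem_support.mp (Finset.mem_compl.mp hi)]
          exact hdiag i
        rw [Finset.prod_congr rfl this, Finset.prod_const, Finset.card_compl,
          Fintype.card_fin]
      rw [h1, h2, one_mul]
    rw [hsignval, hprod, ← pow_add]
    congr 1
    omega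
  rw [← Finset.sum_nbij' (fun S => f S) (fun σ => σ.cycleFactorsFinset)
    (fun S hS => by
      simp only [Finset.mem_filter, Finset.mem_univ, true_and, hcf S (Finset.mem_powerset.mp hS)]
      exact Finset.mem_powerset.mp hS)
    (fun σ hσ => Finset.mem_powerset.mpr (Finset.mem_filter.mp hσ).2)
    (fun S hS => hcf S (Finset.mem_powerset.mp hS))
    (fun σ hσ => hinv σ (Finset.mem_filter.mp hσ).2)
    heval]
  -- final binomial sum
  have hne : 𝒞.Nonempty := Finset.card_pos.mp (by omega)
  have hz : (∑ S ∈ 𝒞.powerset, (-1 : ℝ) ^ S.card) = 0 := by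
    have := Finset.sum_powerset_neg_one_pow_card_of_nonempty hne
    calc (∑ S ∈ 𝒞.powerset, (-1 : ℝ) ^ S.card)
        = ((∑ S ∈ 𝒞.powerset, (-1 : ℤ) ^ S.card : ℤ) : ℝ) := by push_cast; rfl
      _ = 0 := by rw [this, Int.cast_zero]
  simp only [pow_add]
  rw [← Finset.mul_sum, hz, mul_zero]
end

section
/- Let A be an n×n matrix with entries in {−1,0,1}, diagonal entries in {−1,0}, and off-diagonal entries in {0,1}. Suppose there is a distinguished index x* such that every contributing permutation cycle of A passes through x* (so any two contributing cycles share an index). Let N be the number of contributing cycles χ such that every index i with A_{ii} = 0 lies in the support of χ, and let N' = 0 if some diagonal entry is zero and N' = 1 if all diagonal entries are nonzero. Then (−1)^{n−1} det A = N − N'. -/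
open scoped Classical

/-- For a matrix with diagonal entries in `{-1,0}` and off-diagonal entries in `{0,1}` all of
whose contributing cycles pass through a common index `x*`:
`(-1)^(n-1) det A = N - N'`, where `N` counts the contributing cycles whose support contains
every index with zero diagonal entry, and `N' = 1` iff the diagonal has no zero entry. -/
theorem det_of_centralized {n : ℕ} (A : Matrix (Fin n) (Fin n) ℝ)
    (hdiag : ∀ i, A i i = -1 ∨ A i i = 0)
    (hoff : ∀ i j, i ≠ j → A i j = 0 ∨ A i j = 1)
    (xstar : Fin n)
    (hcentral : ∀ χ : Equiv.Perm (Fin n), IsContributingCycle A χ → xstar ∈ χ.support)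
    (N : ℕ)
    (hNcard : N = (Finset.univ.filter (fun χ : Equiv.Perm (Fin n) =>
      IsContributingCycle A χ ∧ ∀ i, A i i = 0 → i ∈ χ.support)).card)
    (N' : ℕ)
    (hN' : N' = if ∀ i, A i i ≠ 0 then 1 else 0) :
    (-1 : ℝ) ^ (n - 1) * A.det = (N : ℝ) - (N' : ℝ) := by
  obtain ⟨m, rfl⟩ : ∃ m, n = m + 1 := ⟨n - 1, (Nat.succ_pred_eq_of_pos xstar.pos).symm⟩
  classical
  set S := Finset.univ.filter (fun χ : Equiv.Perm (Fin (m + 1)) =>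
      IsContributingCycle A χ ∧ ∀ i, A i i = 0 → i ∈ χ.support) with hS
  -- Leibniz formula in the convenient orientation
  have hdet : A.det = ∑ σ : Equiv.Perm (Fin (m + 1)),
      ((Equiv.Perm.sign σ : ℤ) : ℝ) * ∏ i, A i (σ i) := by
    conv_lhs => rw [← Matrix.det_transpose, Matrix.det_apply']
    simp [Matrix.transpose_apply]
  -- Terms outside S, other than the identity, vanish
  have key : ∀ σ : Equiv.Perm (Fin (m + 1)), σ ∉ S → σ ≠ 1 → ∏ i, A i (σ i) = 0 := by
    intro σ hσS hσ1
    by_contra hp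
    have hne : ∀ i, A i (σ i) ≠ 0 := fun i =>
      Finset.prod_ne_zero_iff.mp hp i (Finset.mem_univ i)
    have hsame : ∀ a ∈ σ.support, σ.SameCycle xstar a := by
      intro a ha
      have hc : IsContributingCycle A (σ.cycleOf a) := by
        refine ⟨σ.isCycle_cycleOf (Equiv.Perm.mem_support.mp ha), ?_⟩
        intro j hj
        rw [Equiv.Perm.mem_support_cycleOf_iff] at hj
        rw [Equiv.Perm.cycleOf_apply, if_pos hj.1]
        exact hne j
      have hx := hcentral _ hc
      rw [Equiv.Perm.mem_support_cycleOf_iff] at hx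
      exact hx.1.symm
    have hcyc : σ = σ.cycleOf xstar := by
      ext j
      rw [Equiv.Perm.cycleOf_apply]
      by_cases hj : j ∈ σ.support
      · rw [if_pos (hsame j hj)]
      · have h0 : σ j = j := Equiv.Perm.notMem_support.mp hj
        split <;> simp [h0]
    obtain ⟨a, ha⟩ : σ.support.Nonempty :=
      Finset.nonempty_iff_ne_empty.mpr
        (fun h => hσ1 (Equiv.Perm.support_eq_empty_iff.mp h))
    have hxs : xstar ∈ σ.support := ((hsame a ha).mem_support_iff).mpr ha
    have hσcyc : σ.IsCycle := by
      rw [hcyc]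
      exact σ.isCycle_cycleOf (Equiv.Perm.mem_support.mp hxs)
    apply hσS
    rw [hS, Finset.mem_filter]
    refine ⟨Finset.mem_univ _, ⟨hσcyc, fun j _ => hne j⟩, ?_⟩
    intro i hi
    by_contra hi'
    have h0 : σ i = i := Equiv.Perm.notMem_support.mp hi'
    exact hne i (by rw [h0]; exact hi)
  -- Each term in S equals (-1)^m
  have hterm : ∀ σ ∈ S,
      ((Equiv.Perm.sign σ : ℤ) : ℝ) * ∏ i, A i (σ i) = (-1 : ℝ) ^ m := by
    intro σ hσ
    rw [hS, Finset.mem_filter] at hσ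
    obtain ⟨-, ⟨hcyc, hent⟩, hz⟩ := hσ
    have hprod1 : ∏ i ∈ σ.support, A i (σ i) = 1 := by
      apply Finset.prod_eq_one
      intro i hi
      rcases hoff i (σ i) (Ne.symm (Equiv.Perm.mem_support.mp hi)) with h | h
      · exact absurd h (hent i hi)
      · exact h
    have hprod2 : ∏ i ∈ σ.supportᶜ, A i (σ i)
        = (-1 : ℝ) ^ (m + 1 - σ.support.card) := by
      have hval : ∀ i ∈ σ.supportᶜ, A i (σ i) = -1 := by
        intro i hi
        rw [Finset.mem_compl] at hi
        have h1 : σ i = i := Equiv.Perm.notMem_support.mp hi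
        rw [h1]
        rcases hdiag i with h | h
        · exact h
        · exact absurd (hz i h) hi
      rw [Finset.prod_congr rfl hval, Finset.prod_const, Finset.card_compl]
      simp
    have hprod : ∏ i, A i (σ i) = (-1 : ℝ) ^ (m + 1 - σ.support.card) := by
      rw [← Finset.prod_mul_prod_compl σ.support, hprod1, hprod2, one_mul]
    have hsign : ((Equiv.Perm.sign σ : ℤ) : ℝ) = -(-1 : ℝ) ^ σ.support.card := by
      rw [hcyc.sign]; push_cast; ring
    have hk : σ.support.card ≤ m + 1 :=
      le_trans (Finset.card_le_univ _) (by simp)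
    have hpow : (-1 : ℝ) ^ σ.support.card * (-1 : ℝ) ^ (m + 1 - σ.support.card)
        = (-1 : ℝ) ^ (m + 1) := by
      rw [← pow_add]
      congr 1
      omega
    rw [hprod, hsign, neg_mul, hpow, pow_succ]
    ring
  -- The identity term
  have hone : ((Equiv.Perm.sign (1 : Equiv.Perm (Fin (m + 1))) : ℤ) : ℝ)
      * ∏ i, A i ((1 : Equiv.Perm (Fin (m + 1))) i)
      = if ∀ i, A i i ≠ 0 then (-1 : ℝ) ^ (m + 1) else 0 := by
    by_cases h : ∀ i, A i i ≠ 0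
    · rw [if_pos h]
      have hval : ∀ i, A i i = -1 := fun i => (hdiag i).resolve_right (h i)
      simp [hval]
    · rw [if_neg h]
      push_neg at h
      obtain ⟨i, hi⟩ := h
      rw [Finset.prod_eq_zero (Finset.mem_univ i) (by simpa using hi), mul_zero]
  -- 1 ∉ S
  have h1S : (1 : Equiv.Perm (Fin (m + 1))) ∉ S := by
    rw [hS, Finset.mem_filter]
    rintro ⟨-, ⟨hcyc, -⟩, -⟩
    exact hcyc.ne_one rfl
  -- Sum decomposition
  have hsum : A.det = (S.card : ℝ) * (-1 : ℝ) ^ m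
      + (if ∀ i, A i i ≠ 0 then (-1 : ℝ) ^ (m + 1) else 0) := by
    rw [hdet, ← Finset.sum_add_sum_compl S]
    congr 1
    · rw [Finset.sum_congr rfl hterm, Finset.sum_const, nsmul_eq_mul]
    · rw [← hone]
      apply Finset.sum_eq_single_of_mem (1 : Equiv.Perm (Fin (m + 1)))
        (Finset.mem_compl.mpr h1S)
      intro σ hσ hσ1
      rw [key σ (Finset.mem_compl.mp hσ) hσ1, mul_zero]
  have e1 : (-1 : ℝ) ^ m * (-1 : ℝ) ^ m = 1 := by
    rw [← pow_add]
    exact Even.neg_one_pow ⟨m, rfl⟩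
  have e2 : (-1 : ℝ) ^ m * (-1 : ℝ) ^ (m + 1) = -1 := by
    rw [← pow_add]
    exact Odd.neg_one_pow ⟨m, by ring⟩
  rw [hsum, hNcard, hN']
  simp only [Nat.add_sub_cancel]
  by_cases hd : ∀ i, A i i ≠ 0
  · rw [if_pos hd, if_pos hd]
    push_cast
    linear_combination (S.card : ℝ) * e1 + e2
  · rw [if_neg hd, if_neg hd]
    push_cast
    linear_combination (S.card : ℝ) * e1
end
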